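/- arXiv:1912.09841 — 2 statements merged into one kernel-verified Lean document; each statement's English description precedes it below -/
import Mathlib

section
/- Let K ≥ 1, let λ, σ be K-tuples of nonnegative reals, and define D_{λ,σ}(f) = ∑_{x=1}^K [λ_x (1−f) f^{x-1} − σ_x f (1−f)^{x-1}] for f ∈ [0,1]. If λ, σ are non-increasing with λ_1 > 0 and σ_1 > 0, then D_{λ,σ} is continuous and strictly decreasing on [0,1], with D_{λ,σ}(0) = λ_1 ≥ 0 and D_{λ,σ}(1) = −σ_1 ≤ 0; consequently there exists a unique m* ∈ [0,1] with D_{λ,σ}(m*) = 0. -/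
/-- The boundary operator `D_{λ,σ}` acting on a scalar `f`. -/
noncomputable def Dop (K : ℕ) (lam sig : ℕ → ℝ) (f : ℝ) : ℝ :=
  ∑ x ∈ Finset.Icc 1 K, (lam x * (1 - f) * f ^ (x - 1) - sig x * f * (1 - f) ^ (x - 1))

namespace DopAux

/-- truncated coefficients -/
noncomputable def ctr (K : ℕ) (c : ℕ → ℝ) (x : ℕ) : ℝ := if x ≤ K then c x else 0

noncomputable def ecoef (K : ℕ) (c : ℕ → ℝ) (i : ℕ) : ℝ := ctr K c (i + 1) - ctr K c (i + 2)

noncomputable def gfun (K : ℕ) (c : ℕ → ℝ) (f : ℝ) : ℝ :=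
  ∑ x ∈ Finset.Icc 1 K, c x * (1 - f) * f ^ (x - 1)

lemma key_identity (K : ℕ) (hK : 1 ≤ K) (c : ℕ → ℝ) (f : ℝ) :
    gfun K c f = c 1 - ∑ i ∈ Finset.range K, ecoef K c i * f ^ (i + 1) := by
  have h1 : gfun K c f = ∑ i ∈ Finset.range K, c (i + 1) * (1 - f) * f ^ i := by
    rw [gfun, ← Finset.Ico_add_one_right_eq_Icc, Finset.sum_Ico_eq_sum_range]
    apply Finset.sum_congr (by norm_num)
    intro i _
    congr 2
    · congr 1; omega
    · omega
  have h2 : ∑ i ∈ Finset.range K, (c (i + 1) * (1 - f) * f ^ i + ecoef K c i * f ^ (i + 1))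
      = ∑ i ∈ Finset.range K,
        ((fun i => ctr K c (i + 1) * f ^ i) i - (fun i => ctr K c (i + 1) * f ^ (i)) (i + 1)) := by
    apply Finset.sum_congr rfl
    intro i hi
    have hiK : i + 1 ≤ K := Finset.mem_range.mp hi
    simp only [ecoef, ctr, if_pos hiK]
    ring
  rw [h1, eq_sub_iff_add_eq, ← Finset.sum_add_distrib, h2, Finset.sum_range_sub']
  simp [ctr, hK, Nat.not_succ_le_self K]

lemma ecoef_nonneg (K : ℕ) (c : ℕ → ℝ)
    (hnn : ∀ x ∈ Finset.Icc 1 K, 0 ≤ c x)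
    (hmono : ∀ x, 1 ≤ x → x + 1 ≤ K → c (x + 1) ≤ c x)
    (i : ℕ) : 0 ≤ ecoef K c i := by
  unfold ecoef ctr
  by_cases h2 : i + 2 ≤ K
  · rw [if_pos (by omega), if_pos h2]
    have := hmono (i + 1) (by omega) (by omega)
    linarith
  · rw [if_neg h2]
    by_cases h1 : i + 1 ≤ K
    · rw [if_pos h1]
      simpa using hnn (i + 1) (Finset.mem_Icc.mpr ⟨by omega, h1⟩)
    · simp [h1]

lemma ecoef_sum (K : ℕ) (hK : 1 ≤ K) (c : ℕ → ℝ) :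
    ∑ i ∈ Finset.range K, ecoef K c i = c 1 := by
  have : ∑ i ∈ Finset.range K,
      ((fun i => ctr K c (i + 1)) i - (fun i => ctr K c (i + 1)) (i + 1)) = _ :=
    Finset.sum_range_sub' (fun i => ctr K c (i + 1)) K
  have e : ∀ i, ecoef K c i = ctr K c (i + 1) - ctr K c (i + 1 + 1) := fun i => rfl
  simp only [e]
  simpa [ctr, hK, Nat.not_succ_le_self K] using this

lemma gfun_strictAnti (K : ℕ) (hK : 1 ≤ K) (c : ℕ → ℝ)
    (hnn : ∀ x ∈ Finset.Icc 1 K, 0 ≤ c x)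
    (hmono : ∀ x, 1 ≤ x → x + 1 ≤ K → c (x + 1) ≤ c x)
    (hc1 : 0 < c 1) {a b : ℝ} (ha : a ∈ Set.Icc (0:ℝ) 1) (hb : b ∈ Set.Icc (0:ℝ) 1)
    (hab : a < b) : gfun K c b < gfun K c a := by
  rw [key_identity K hK c a, key_identity K hK c b]
  have hsum : ∑ i ∈ Finset.range K, ecoef K c i * a ^ (i + 1)
      < ∑ i ∈ Finset.range K, ecoef K c i * b ^ (i + 1) := by
    obtain ⟨i0, hi0, hpos⟩ : ∃ i ∈ Finset.range K, 0 < ecoef K c i := by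
      by_contra h
      push_neg at h
      have : ∑ i ∈ Finset.range K, ecoef K c i ≤ 0 := Finset.sum_nonpos h
      rw [ecoef_sum K hK c] at this; linarith
    apply Finset.sum_lt_sum
    · intro i _
      exact mul_le_mul_of_nonneg_left (pow_le_pow_left₀ ha.1 hab.le _)
        (ecoef_nonneg K c hnn hmono i)
    · exact ⟨i0, hi0, mul_lt_mul_of_pos_left
        (pow_lt_pow_left₀ hab ha.1 (Nat.succ_ne_zero _)) hpos⟩
  linarith

lemma Dop_eq (K : ℕ) (lam sig : ℕ → ℝ) (f : ℝ) :
    Dop K lam sig f = gfun K lam f - gfun K sig (1 - f) := by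
  rw [Dop, gfun, gfun, ← Finset.sum_sub_distrib]
  apply Finset.sum_congr rfl
  intro x _
  ring_nf

end DopAux

theorem D_unique_zero (K : ℕ) (hK : 1 ≤ K) (lam sig : ℕ → ℝ)
    (hlamnn : ∀ x ∈ Finset.Icc 1 K, 0 ≤ lam x)
    (hsignn : ∀ x ∈ Finset.Icc 1 K, 0 ≤ sig x)
    (hlammono : ∀ x, 1 ≤ x → x + 1 ≤ K → lam (x + 1) ≤ lam x)
    (hsigmono : ∀ x, 1 ≤ x → x + 1 ≤ K → sig (x + 1) ≤ sig x)
    (hlam1 : 0 < lam 1) (hsig1 : 0 < sig 1) :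
    ContinuousOn (Dop K lam sig) (Set.Icc 0 1) ∧
      StrictAntiOn (Dop K lam sig) (Set.Icc 0 1) ∧
      Dop K lam sig 0 = lam 1 ∧ Dop K lam sig 1 = -sig 1 ∧
      (∃! m, m ∈ Set.Icc (0:ℝ) 1 ∧ Dop K lam sig m = 0) := by
  have hcont : Continuous (Dop K lam sig) := by
    unfold Dop
    apply continuous_finset_sum
    intro x _
    fun_prop
  have hanti : StrictAntiOn (Dop K lam sig) (Set.Icc 0 1) := by
    intro a ha b hb hab
    rw [DopAux.Dop_eq, DopAux.Dop_eq]
    have h1 := DopAux.gfun_strictAnti K hK lam hlamnn hlammono hlam1 ha hb hab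
    have h2 := DopAux.gfun_strictAnti K hK sig hsignn hsigmono hsig1
      (a := 1 - b) (b := 1 - a)
      ⟨by linarith [hb.2], by linarith [hb.1]⟩
      ⟨by linarith [ha.2], by linarith [ha.1]⟩ (by linarith)
    linarith
  have hD0 : Dop K lam sig 0 = lam 1 := by
    rw [Dop]
    rw [Finset.sum_eq_single 1]
    · norm_num
    · intro x hx hx1
      have : 1 ≤ x ∧ x ≤ K := Finset.mem_Icc.mp hx
      have hx2 : 2 ≤ x := by omega
      have : (0:ℝ) ^ (x - 1) = 0 := zero_pow (by omega)
      rw [this]; ring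
    · intro h
      exact absurd (Finset.mem_Icc.mpr ⟨le_refl 1, hK⟩) h
  have hD1 : Dop K lam sig 1 = -sig 1 := by
    rw [Dop]
    rw [Finset.sum_eq_single 1]
    · norm_num
    · intro x hx hx1
      have : 1 ≤ x ∧ x ≤ K := Finset.mem_Icc.mp hx
      have : ((1:ℝ) - 1) ^ (x - 1) = 0 := by
        rw [sub_self]; exact zero_pow (by omega)
      rw [this]; ring
    · intro h
      exact absurd (Finset.mem_Icc.mpr ⟨le_refl 1, hK⟩) h
  refine ⟨hcont.continuousOn, hanti, hD0, hD1, ?_⟩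
  have hsub : Set.Icc (Dop K lam sig 1) (Dop K lam sig 0)
      ⊆ Dop K lam sig '' Set.Icc 0 1 :=
    intermediate_value_Icc' (by norm_num) hcont.continuousOn
  have h0mem : (0:ℝ) ∈ Set.Icc (Dop K lam sig 1) (Dop K lam sig 0) := by
    rw [hD0, hD1]; exact ⟨by linarith, by linarith⟩
  obtain ⟨m, hm, hm0⟩ := hsub h0mem
  refine ⟨m, ⟨hm, hm0⟩, ?_⟩
  intro y ⟨hy, hy0⟩
  by_contra hne
  rcases lt_or_gt_of_ne hne with h | h
  · have := hanti hy hm h; rw [hy0, hm0] at this; exact lt_irrefl 0 this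
  · have := hanti hm hy h; rw [hy0, hm0] at this; exact lt_irrefl 0 this
end

section
/- Let 𝔦 = (𝔦_1,…,𝔦_K) and 𝔬 = (𝔬_1,…,𝔬_K) be non-increasing K-tuples of nonnegative reals with 𝔦_1, 𝔬_1 > 0, and let m* ∈ [0,1] be the unique zero of D_{𝔦,𝔬}. If m : [0,∞) → [0,1] is a solution of the integral equation m_t = m_0 + ∫_0^t D_{𝔦,𝔬}(m_s) ds, then |m_t − m*| ≤ |m_0 − m*| e^{−c t} for all t ≥ 0, where c > 0 is a lower bound for V_{𝔦,𝔬} on [0,1]² (with V as in the decomposition D_{𝔦,𝔬}(y) − D_{𝔦,𝔬}(z) = −(y−z) V_{𝔦,𝔬}(y,z)). In particular m_t → m* as t → ∞. -/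
open Filter

/-- The kernel `v_x(y,z)`. -/
noncomputable def vfun (x : ℕ) (y z : ℝ) : ℝ :=
  if x = 1 then 1
  else if x = 2 then y + z
  else y ^ (x - 1) + z ^ (x - 1) + ∑ i ∈ Finset.Icc 1 (x - 2), z ^ i * y ^ (x - 1 - i)

/-- The operator `V_φ(y,z) = ∑_{x=1}^K (φ_x − φ_{x+1}) v_x(y,z)`. -/
noncomputable def Vphi (K : ℕ) (φ : ℕ → ℝ) (y z : ℝ) : ℝ :=
  ∑ x ∈ Finset.Icc 1 K, (φ x - φ (x + 1)) * vfun x y z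

lemma vfun_eq_geom (n : ℕ) (hn : 1 ≤ n) (y z : ℝ) :
    vfun n y z = ∑ i ∈ Finset.range n, z ^ i * y ^ (n - 1 - i) := by
  match n, hn with
  | 1, _ => simp [vfun]
  | 2, _ => norm_num [vfun, Finset.sum_range_succ]
  | (k+3), _ =>
    simp only [vfun, if_neg (by omega : ¬ k+3 = 1), if_neg (by omega : ¬ k+3 = 2)]
    rw [Finset.sum_range_succ, Finset.sum_range_succ']
    have h1 : Finset.Icc 1 (k+3-2) = Finset.Ico 1 (k+2) := by
      have : k+3-2 = k+1 := by omega
      rw [this, ← Finset.Ico_add_one_right_eq_Icc]; rfl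
    rw [h1, Finset.sum_Ico_eq_sum_range]
    have h2 : ∀ i ∈ Finset.range (k+2-1), z ^ (1+i) * y ^ (k+3-1-(1+i)) = z ^ (i+1) * y ^ (k+3-1-(i+1)) := by
      intro i hi
      rw [add_comm 1 i]
    rw [Finset.sum_congr rfl h2]
    simp only [show k+2-1 = k+1 from by omega, show k+3-1 = k+2 from by omega,
      show k+2-(k+1+1) = 0 from by omega, Nat.sub_zero, pow_zero, mul_one, one_mul]
    ring

lemma vfun_mul (n : ℕ) (hn : 1 ≤ n) (y z : ℝ) :
    (y - z) * vfun n y z = y ^ n - z ^ n := by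
  rw [vfun_eq_geom n hn]
  have := geom_sum₂_mul z y n
  linarith [this]

lemma Vphi_mul (K : ℕ) (φ : ℕ → ℝ) (y z : ℝ) :
    (y - z) * Vphi K φ y z = ∑ x ∈ Finset.Icc 1 K, (φ x - φ (x + 1)) * (y ^ x - z ^ x) := by
  rw [Vphi, Finset.mul_sum]
  apply Finset.sum_congr rfl
  intro x hx
  simp only [Finset.mem_Icc] at hx
  rw [← vfun_mul x hx.1 y z]
  ring

lemma telescope (K : ℕ) (φ : ℕ → ℝ) (f : ℝ) :
    ∑ x ∈ Finset.Icc 1 K, φ x * (1 - f) * f ^ (x - 1)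
      = φ 1 - φ (K+1) * f ^ K - ∑ x ∈ Finset.Icc 1 K, (φ x - φ (x + 1)) * f ^ x := by
  induction K with
  | zero => simp
  | succ n ih =>
    rw [Finset.sum_Icc_succ_top (by omega), Finset.sum_Icc_succ_top (by omega), ih]
    have : n + 1 - 1 = n := by omega
    rw [this]
    ring

lemma Dop_eq (K : ℕ) (lam sig : ℕ → ℝ) (f : ℝ) :
    Dop K lam sig f = (lam 1 - lam (K+1) * f ^ K - ∑ x ∈ Finset.Icc 1 K, (lam x - lam (x + 1)) * f ^ x)
      - (sig 1 - sig (K+1) * (1-f) ^ K - ∑ x ∈ Finset.Icc 1 K, (sig x - sig (x + 1)) * (1-f) ^ x) := by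
  rw [Dop, Finset.sum_sub_distrib, telescope K lam f, ← telescope K sig (1-f)]
  congr 1
  apply Finset.sum_congr rfl
  intro x hx
  ring_nf

lemma Dop_diff (K : ℕ) (lam sig : ℕ → ℝ) (hlK : lam (K+1) = 0) (hsK : sig (K+1) = 0) (y z : ℝ) :
    Dop K lam sig y - Dop K lam sig z
      = -(y - z) * (Vphi K lam y z + Vphi K sig (1 - y) (1 - z)) := by
  have h1 := Vphi_mul K lam y z
  have h2 := Vphi_mul K sig (1-y) (1-z)
  rw [Dop_eq, Dop_eq, hlK, hsK]
  have e1 : ∑ x ∈ Finset.Icc 1 K, (lam x - lam (x + 1)) * y ^ x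
      - ∑ x ∈ Finset.Icc 1 K, (lam x - lam (x + 1)) * z ^ x
      = (y - z) * Vphi K lam y z := by
    rw [h1, ← Finset.sum_sub_distrib]
    apply Finset.sum_congr rfl; intro x _; ring
  have e2 : ∑ x ∈ Finset.Icc 1 K, (sig x - sig (x + 1)) * (1-y) ^ x
      - ∑ x ∈ Finset.Icc 1 K, (sig x - sig (x + 1)) * (1-z) ^ x
      = ((1-y) - (1-z)) * Vphi K sig (1-y) (1-z) := by
    rw [h2, ← Finset.sum_sub_distrib]
    apply Finset.sum_congr rfl; intro x _; ring
  have e3 : (1-y) - (1-z) = -(y-z) := by ring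
  rw [e3] at e2
  linarith [e1, e2]

theorem mass_exponential_convergence (K : ℕ) (hK : 1 ≤ K) (i o : ℕ → ℝ)
    (hinn : ∀ x ∈ Finset.Icc 1 K, 0 ≤ i x) (honn : ∀ x ∈ Finset.Icc 1 K, 0 ≤ o x)
    (himono : ∀ x, 1 ≤ x → x + 1 ≤ K → i (x + 1) ≤ i x)
    (homono : ∀ x, 1 ≤ x → x + 1 ≤ K → o (x + 1) ≤ o x)
    (hi1 : 0 < i 1) (ho1 : 0 < o 1)
    (hiK : i (K + 1) = 0) (hoK : o (K + 1) = 0)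
    (mstar : ℝ) (hmstar : mstar ∈ Set.Icc (0:ℝ) 1) (hroot : Dop K i o mstar = 0)
    (c : ℝ) (hc : 0 < c)
    (hV : ∀ y ∈ Set.Icc (0:ℝ) 1, ∀ z ∈ Set.Icc (0:ℝ) 1,
      c ≤ Vphi K i y z + Vphi K o (1 - y) (1 - z))
    (m : ℝ → ℝ) (hmcont : Continuous m) (hm01 : ∀ t, 0 ≤ t → m t ∈ Set.Icc (0:ℝ) 1)
    (hinteq : ∀ t, 0 ≤ t → m t = m 0 + ∫ s in (0:ℝ)..t, Dop K i o (m s)) :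
    (∀ t, 0 ≤ t → |m t - mstar| ≤ |m 0 - mstar| * Real.exp (-c * t)) ∧
      Tendsto m atTop (nhds mstar) := by
  -- continuity of Dop in f
  have hDcont : Continuous (fun f => Dop K i o f) := by
    unfold Dop
    apply continuous_finset_sum
    intro x _
    fun_prop
  -- derivative of m on (0, ∞)
  have hF : ∀ t : ℝ, HasDerivAt (fun t => m 0 + ∫ s in (0:ℝ)..t, Dop K i o (m s))
      (Dop K i o (m t)) t := by
    intro t
    exact (((hDcont.comp hmcont).integral_hasStrictDerivAt 0 t).hasDerivAt).const_add (m 0)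
  have hmderiv : ∀ t : ℝ, 0 < t → HasDerivAt m (Dop K i o (m t)) t := by
    intro t ht
    apply (hF t).congr_of_eventuallyEq
    filter_upwards [Ioi_mem_nhds ht] with s hs
    exact hinteq s (le_of_lt hs)
  -- the "W" function and its lower bound
  set W : ℝ → ℝ := fun t => Vphi K i (m t) mstar + Vphi K o (1 - m t) (1 - mstar) with hW
  have hWc : ∀ t, 0 ≤ t → c ≤ W t := fun t ht => hV (m t) (hm01 t ht) mstar hmstar
  have hDval : ∀ t, Dop K i o (m t) = -(m t - mstar) * W t := by
    intro t
    have h := Dop_diff K i o hiK hoK (m t) mstar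
    rw [hroot] at h
    simp only [hW]
    linarith [h]
  -- the Lyapunov function
  set g : ℝ → ℝ := fun t => (m t - mstar) ^ 2 * Real.exp (2 * c * t) with hgdef
  have hg : ∀ t : ℝ, 0 < t →
      HasDerivAt g (2 * Real.exp (2 * c * t) * (m t - mstar) ^ 2 * (c - W t)) t := by
    intro t ht
    have h1 : HasDerivAt (fun t => (m t - mstar) ^ 2)
        (2 * (m t - mstar) * Dop K i o (m t)) t := by
      have := ((hmderiv t ht).sub_const mstar).pow 2
      refine this.congr_deriv ?_
      push_cast
      ring
    have h2 : HasDerivAt (fun t => Real.exp (2 * c * t)) (2 * c * Real.exp (2 * c * t)) t := by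
      have h := ((hasDerivAt_id t).const_mul (2 * c)).exp
      simp only [id_eq] at h
      convert h using 1
      ring
    have := h1.mul h2
    refine this.congr_deriv ?_
    rw [hDval t]
    ring
  -- g is antitone on [0, ∞)
  have hganti : AntitoneOn g (Set.Ici (0:ℝ)) := by
    apply antitoneOn_of_deriv_nonpos (convex_Ici 0)
    · exact (((hmcont.sub continuous_const).pow 2).mul
        (Real.continuous_exp.comp (continuous_const.mul continuous_id))).continuousOn
    · intro t ht
      rw [interior_Ici] at ht
      exact ((hg t ht).differentiableAt).differentiableWithinAt
    · intro t ht
      rw [interior_Ici] at ht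
      rw [(hg t ht).deriv]
      have h1 : c - W t ≤ 0 := by linarith [hWc t ht.le]
      have h2 : (0:ℝ) ≤ 2 * Real.exp (2 * c * t) * (m t - mstar) ^ 2 := by positivity
      exact mul_nonpos_of_nonneg_of_nonpos h2 h1
  -- the pointwise bound
  have hbound : ∀ t, 0 ≤ t → |m t - mstar| ≤ |m 0 - mstar| * Real.exp (-c * t) := by
    intro t ht
    have hle : g t ≤ g 0 := hganti (Set.self_mem_Ici) ht ht
    have hg0 : g 0 = (m 0 - mstar) ^ 2 := by simp [hgdef]
    have hle2 : (m t - mstar) ^ 2 ≤ (m 0 - mstar) ^ 2 * Real.exp (-(2 * c * t)) := by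
      rw [Real.exp_neg, ← div_eq_mul_inv, le_div_iff₀ (Real.exp_pos _)]
      rw [hg0] at hle
      exact hle
    have hB2 : (|m 0 - mstar| * Real.exp (-c * t)) ^ 2
        = (m 0 - mstar) ^ 2 * Real.exp (-(2 * c * t)) := by
      rw [mul_pow, sq_abs, sq (Real.exp (-c * t)), ← Real.exp_add]
      congr 1
      ring
    calc |m t - mstar| = Real.sqrt ((m t - mstar) ^ 2) := (Real.sqrt_sq_eq_abs _).symm
      _ ≤ Real.sqrt ((|m 0 - mstar| * Real.exp (-c * t)) ^ 2) := by
          apply Real.sqrt_le_sqrt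
          rw [hB2]; exact hle2
      _ = |m 0 - mstar| * Real.exp (-c * t) := Real.sqrt_sq (by positivity)
  refine ⟨hbound, ?_⟩
  -- convergence
  rw [tendsto_iff_dist_tendsto_zero]
  have hdist : ∀ t, dist (m t) mstar = |m t - mstar| := fun t => Real.dist_eq _ _
  have hlim : Tendsto (fun t => |m 0 - mstar| * Real.exp (-c * t)) atTop (nhds 0) := by
    have h1 : Tendsto (fun t : ℝ => -c * t) atTop atBot := by
      apply Tendsto.const_mul_atTop_of_neg (by linarith : -c < 0)
      exact tendsto_id
    have h2 : Tendsto (fun t : ℝ => Real.exp (-c * t)) atTop (nhds 0) :=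
      Real.tendsto_exp_atBot.comp h1
    have := h2.const_mul (|m 0 - mstar|)
    simpa using this
  refine squeeze_zero' ?_ ?_ hlim
  · filter_upwards with t
    rw [hdist]
    exact abs_nonneg _
  · filter_upwards [eventually_ge_atTop (0:ℝ)] with t ht
    rw [hdist]
    exact hbound t ht
end
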